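/- For open sets J, K ⊆ ℝ and names ρ, σ, τ: if J ⊩ σ = τ and K ⊩ ρ ∈ σ, then (J ∩ K) ⊩ ρ ∈ τ. -/

import Mathlib

/-- Names over ℝ: a name is a family of pairs of a name and an open set of reals. -/
inductive Name : Type 1
  | mk (ι : Type) (elem : ι → Name) (cond : ι → Set ℝ) (hopen : ∀ i, IsOpen (cond i)) : Name

namespace Name

/-- The index type of the family of pairs of a name. -/
def idx : Name → Type
  | mk ι _ _ _ => ι

/-- The name component of the `i`-th pair. -/
def elem : (σ : Name) → σ.idx → Name
  | mk _ e _ _ => e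

/-- The open-set component of the `i`-th pair. -/
def cond : (σ : Name) → σ.idx → Set ℝ
  | mk _ _ c _ => c

theorem cond_isOpen : ∀ (σ : Name) (i : σ.idx), IsOpen (σ.cond i)
  | mk _ _ _ h => h

/-- Rank of a name, used for the recursive definition of forcing. -/
noncomputable def rank : Name → Ordinal.{0}
  | mk _ e _ _ => Ordinal.lsub fun i => rank (e i)

theorem rank_elem_lt : ∀ (σ : Name) (i : σ.idx), (σ.elem i).rank < σ.rank
  | mk ι e c h, i => by
    simpa [rank, elem] using Ordinal.lt_lsub (fun i => rank (e i)) i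

theorem rank_measure_lt_left {a a' b : Ordinal.{0}} (h : a' < a) :
    Prod.Lex (· < ·) (· < ·) (max a' b, min a' b) (max a b, min a b) := by
  rcases le_total a b with hab | hab
  · rw [max_eq_right hab, min_eq_left hab, max_eq_right (h.le.trans hab),
      min_eq_left (h.le.trans hab)]
    exact Prod.Lex.right _ h
  · rw [max_eq_left hab, min_eq_right hab]
    rcases lt_or_eq_of_le (max_le h.le hab) with hm | hm
    · exact Prod.Lex.left _ _ hm
    · rw [hm]
      apply Prod.Lex.right
      rcases le_total a' b with h' | h'
      · rw [max_eq_right h'] at hm; rw [min_eq_left h']; rw [hm]; exact h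
      · rw [max_eq_left h'] at hm; exact absurd hm h.ne

mutual
  /-- `feq σ τ J` means `J ⊩ σ = τ`. -/
  def feq (σ τ : Name) (J : Set ℝ) : Prop :=
    (∀ i : σ.idx, fmem (σ.elem i) τ (J ∩ σ.cond i)) ∧
    (∀ j : τ.idx, fmem (τ.elem j) σ (J ∩ τ.cond j))
  termination_by (max σ.rank τ.rank, min σ.rank τ.rank)
  decreasing_by
    · exact rank_measure_lt_left (rank_elem_lt σ i)
    · rw [max_comm σ.rank, min_comm σ.rank]
      exact rank_measure_lt_left (rank_elem_lt τ j)

  /-- `fmem σ τ J` means `J ⊩ σ ∈ τ`. -/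
  def fmem (σ τ : Name) (J : Set ℝ) : Prop :=
    ∀ r ∈ J, ∃ (j : τ.idx) (J' : Set ℝ), IsOpen J' ∧ r ∈ J' ∩ τ.cond j ∧
      feq σ (τ.elem j) (J' ∩ τ.cond j)
  termination_by (max σ.rank τ.rank, min σ.rank τ.rank)
  decreasing_by
    rw [max_comm σ.rank, min_comm σ.rank, max_comm σ.rank, min_comm σ.rank]
    exact rank_measure_lt_left (rank_elem_lt τ j)
end

end Name

namespace Name

theorem feq_iff {σ τ : Name} {J : Set ℝ} :
    feq σ τ J ↔ (∀ i : σ.idx, fmem (σ.elem i) τ (J ∩ σ.cond i)) ∧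
      (∀ j : τ.idx, fmem (τ.elem j) σ (J ∩ τ.cond j)) := by
  rw [feq]

theorem fmem_iff {σ τ : Name} {J : Set ℝ} :
    fmem σ τ J ↔ ∀ r ∈ J, ∃ (j : τ.idx) (J' : Set ℝ), IsOpen J' ∧ r ∈ J' ∩ τ.cond j ∧
      feq σ (τ.elem j) (J' ∩ τ.cond j) := by
  rw [fmem]

theorem fmem_mono {σ τ : Name} {J J' : Set ℝ} (h : fmem σ τ J) (hJ : J' ⊆ J) :
    fmem σ τ J' :=
  fmem_iff.2 fun r hr => fmem_iff.1 h r (hJ hr)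

theorem feq_mono {σ τ : Name} {J J' : Set ℝ} (h : feq σ τ J) (hJ : J' ⊆ J) :
    feq σ τ J' :=
  feq_iff.2 ⟨fun i => fmem_mono ((feq_iff.1 h).1 i) (Set.inter_subset_inter_left _ hJ),
    fun j => fmem_mono ((feq_iff.1 h).2 j) (Set.inter_subset_inter_left _ hJ)⟩

theorem feq_symm {σ τ : Name} {J : Set ℝ} (h : feq σ τ J) : feq τ σ J :=
  feq_iff.2 (feq_iff.1 h).symm

/- Proved together by induction on the ranks of the two outer names. For membership: near a
point r, a pair ⟨σⱼ, Jⱼ⟩ of σ with ρ = σⱼ forced is matched, through the forced equality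
σ = τ, with a pair ⟨τₖ, Jₖ⟩ of τ with σⱼ = τₖ forced; transitivity at lower rank then forces
ρ = τₖ on the intersection of the neighbourhoods. -/
mutual
  theorem feq_trans {ρ σ τ : Name} {A B : Set ℝ} (h₁ : feq ρ σ A) (h₂ : feq σ τ B) :
      feq ρ τ (A ∩ B) :=
    feq_iff.2
      ⟨fun i => fmem_mono (fmem_congr_right h₂ ((feq_iff.1 h₁).1 i))
          fun _ ⟨⟨hA, hB⟩, hi⟩ => ⟨hB, hA, hi⟩,
        fun k => fmem_mono (fmem_congr_right (feq_symm h₁) ((feq_iff.1 h₂).2 k))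
          (Set.inter_assoc _ _ _).subset⟩
  termination_by (max ρ.rank τ.rank, min ρ.rank τ.rank)
  decreasing_by
    · exact rank_measure_lt_left (rank_elem_lt ρ i)
    · rw [max_comm ρ.rank, min_comm ρ.rank]
      exact rank_measure_lt_left (rank_elem_lt τ k)

  theorem fmem_congr_right {ρ σ τ : Name} {A B : Set ℝ} (h₁ : feq σ τ A) (h₂ : fmem ρ σ B) :
      fmem ρ τ (A ∩ B) := by
    refine fmem_iff.2 fun r ⟨hrA, hrB⟩ => ?_
    obtain ⟨j, J', hJ', ⟨hrJ', hrj⟩, hρ⟩ := fmem_iff.1 h₂ r hrB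
    obtain ⟨k, J'', hJ'', ⟨hrJ'', hrk⟩, hτ⟩ := fmem_iff.1 ((feq_iff.1 h₁).1 j) r ⟨hrA, hrj⟩
    refine ⟨k, J' ∩ σ.cond j ∩ J'', (hJ'.inter (σ.cond_isOpen j)).inter hJ'',
      ⟨⟨⟨hrJ', hrj⟩, hrJ''⟩, hrk⟩, feq_mono (feq_trans hρ hτ) (Set.inter_assoc _ _ _).subset⟩
  termination_by (max ρ.rank τ.rank, min ρ.rank τ.rank)
  decreasing_by
    rw [max_comm ρ.rank, min_comm ρ.rank, max_comm ρ.rank, min_comm ρ.rank]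
    exact rank_measure_lt_left (rank_elem_lt τ k)
end

end Name

theorem forces_mem_congr_right (J K : Set ℝ) (hJ : IsOpen J) (hK : IsOpen K) (ρ σ τ : Name)
    (h₁ : Name.feq σ τ J) (h₂ : Name.fmem ρ σ K) : Name.fmem ρ τ (J ∩ K) :=
  Name.fmem_congr_right h₁ h₂
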